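/- arXiv:1604.01238 — 3 statements merged into one kernel-verified Lean document; each statement's English description precedes it below -/
import Mathlib

section
/- Let T be a (1,2)-tensor on a finite-dimensional real vector space V (dim V = n ≥ 2) that is symmetric in its two lower arguments, i.e., T(u,v) = T(v,u). If for every vector v ∈ V the vector T(v,v) is proportional to v, then there exists a linear functional φ on V such that T(u,v) = φ(v) u + φ(u) v for all u, v ∈ V; in index notation, T^i_{jk} = φ_k δ^i_j + φ_j δ^i_k. -/
/-!
Write `T v v = c v • v`. Comparing this identity with its scalings shows that `c` is homogeneous,
and polarizing it at `u + v` and at `u - v` expresses `2 T(u,v)` in two ways as a combination of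
`u` and `v`; when `u, v` are independent the coefficients must agree, which forces
`c (u + v) = c u + c v`, and the dependent case follows from homogeneity. So `c` is linear, and
the first polarization then reads `2 T(u,v) = c v • u + c u • v`, i.e. `φ = c / 2`.
-/

section

variable {K V : Type*} [Field K] [AddCommGroup V] [Module K V]

/- `T 0 0 = a • 0` for every `a`; normalizing `c 0 = 0` is what makes `c` homogeneous. -/
structure IsDiagCoeff (T : V →ₗ[K] V →ₗ[K] V) (c : V → K) : Prop where
  map_zero : c 0 = 0
  apply_self : ∀ v, T v v = c v • v

theorem exists_isDiagCoeff {T : V →ₗ[K] V →ₗ[K] V} (hprop : ∀ v : V, ∃ a : K, T v v = a • v) :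
    ∃ c, IsDiagCoeff T c := by
  classical
  choose c hc using hprop
  refine ⟨Function.update c 0 0, by simp, fun v => ?_⟩
  rcases eq_or_ne v 0 with rfl | hv
  · simp
  · simpa [hv] using hc v

namespace IsDiagCoeff

variable {T : V →ₗ[K] V →ₗ[K] V} {c : V → K}

theorem map_smul (hc : IsDiagCoeff T c) (a : K) (v : V) : c (a • v) = a * c v := by
  rcases eq_or_ne v 0 with rfl | hv
  · simp [hc.map_zero]
  rcases eq_or_ne a 0 with rfl | ha
  · simp [hc.map_zero]
  have h : (c (a • v) * a) • v = (a * c v * a) • v := calc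
    (c (a • v) * a) • v = T (a • v) (a • v) := by rw [hc.apply_self, smul_smul]
    _ = (a * c v * a) • v := by
      simp only [_root_.map_smul, LinearMap.smul_apply, hc.apply_self, smul_smul, mul_comm]
  exact mul_right_cancel₀ ha (smul_left_injective K hv h)

theorem map_neg (hc : IsDiagCoeff T c) (v : V) : c (-v) = -c v := by
  simpa using hc.map_smul (-1) v

variable (hsymm : ∀ u v : V, T u v = T v u)
include hsymm

theorem two_smul_apply (hc : IsDiagCoeff T c) (u v : V) :
    (2 : K) • T u v = (c (u + v) - c u) • u + (c (u + v) - c v) • v := by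
  have h := hc.apply_self (u + v)
  simp only [_root_.map_add, LinearMap.add_apply, hc.apply_self, hsymm v u] at h
  linear_combination (norm := module) h

variable [NeZero (2 : K)]

theorem map_add_of_linearIndependent (hc : IsDiagCoeff T c) {u v : V}
    (huv : LinearIndependent K ![u, v]) : c (u + v) = c u + c v := by
  have h := hc.two_smul_apply hsymm u (-v)
  rw [_root_.map_neg, smul_neg, ← sub_eq_add_neg, hc.map_neg, hc.two_smul_apply hsymm] at h
  have h0 : (c (u + v) + c (u - v) - 2 * c u) • u
      + (c (u + v) - c (u - v) - 2 * c v) • v = 0 := by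
    linear_combination (norm := module) -h
  obtain ⟨hu, hv⟩ := LinearIndependent.pair_iff.1 huv _ _ h0
  exact mul_left_cancel₀ two_ne_zero (by linear_combination hu + hv : 2 * c (u + v) = _)

theorem map_add (hc : IsDiagCoeff T c) (u v : V) : c (u + v) = c u + c v := by
  by_cases huv : LinearIndependent K ![u, v]
  · exact hc.map_add_of_linearIndependent hsymm huv
  rcases eq_or_ne v 0 with rfl | hv
  · simp [hc.map_zero]
  obtain ⟨a, rfl⟩ : ∃ a : K, a • v = u := by simpa [linearIndependent_fin2, hv] using huv
  rw [show a • v + v = (a + 1) • v by module, hc.map_smul, hc.map_smul]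
  ring

end IsDiagCoeff

theorem exists_apply_eq_smul_add_smul [NeZero (2 : K)] {T : V →ₗ[K] V →ₗ[K] V}
    (hsymm : ∀ u v : V, T u v = T v u) (hprop : ∀ v : V, ∃ a : K, T v v = a • v) :
    ∃ φ : V →ₗ[K] K, ∀ u v : V, T u v = φ v • u + φ u • v := by
  obtain ⟨c, hc⟩ := exists_isDiagCoeff hprop
  let ψ : V →ₗ[K] K :=
    { toFun := c, map_add' := hc.map_add hsymm, map_smul' := hc.map_smul }
  refine ⟨(2 : K)⁻¹ • ψ, fun u v => ?_⟩
  have h := hc.two_smul_apply hsymm u v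
  rw [hc.map_add hsymm] at h
  rw [← inv_smul_smul₀ (two_ne_zero (α := K)) (T u v), h]
  simp only [LinearMap.smul_apply, smul_eq_mul, mul_smul, ψ, LinearMap.coe_mk, AddHom.coe_mk]
  module

end

theorem statement_1_general (V : Type*) [AddCommGroup V] [Module ℝ V]
    (T : V →ₗ[ℝ] V →ₗ[ℝ] V)
    (hsymm : ∀ u v : V, T u v = T v u)
    (hprop : ∀ v : V, ∃ c : ℝ, T v v = c • v) :
    ∃ φ : V →ₗ[ℝ] ℝ, ∀ u v : V, T u v = φ v • u + φ u • v := by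
  exact exists_apply_eq_smul_add_smul hsymm hprop

/-- Let `T` be a `(1,2)`-tensor on a finite-dimensional real vector space `V`
(`dim V = n ≥ 2`) that is symmetric in its two lower arguments. If for every vector `v ∈ V` the
vector `T(v,v)` is proportional to `v`, then there exists a linear functional `φ` on `V` such
that `T(u,v) = φ(v) u + φ(u) v` for all `u, v ∈ V`. -/
theorem statement_1 (V : Type*) [AddCommGroup V] [Module ℝ V] [FiniteDimensional ℝ V]
    (hn : 2 ≤ Module.finrank ℝ V)
    (T : V →ₗ[ℝ] V →ₗ[ℝ] V)
    (hsymm : ∀ u v : V, T u v = T v u)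
    (hprop : ∀ v : V, ∃ c : ℝ, T v v = c • v) :
    ∃ φ : V →ₗ[ℝ] ℝ, ∀ u v : V, T u v = φ v • u + φ u • v :=
  statement_1_general V T hsymm hprop
end

section
/- Let M be an oriented n-dimensional manifold and let ∇ and ∇̄ be projectively equivalent torsion-free affine connections on M. Then for every 1-form K of projective weight −2 (i.e., every section of T^{(0,1)}M ⊗ (Λ_n)^{−2/(n+1)}M), the symmetrizations of the covariant derivatives agree: (∇̄_X K)(Y) + (∇̄_Y K)(X) = (∇_X K)(Y) + (∇_Y K)(X) for all vector fields X, Y. In other words, the differential operator K ↦ Symmetrization(∇K), in indices K_i ↦ K_{i,j} + K_{j,i}, does not depend on the choice of connection within the projective class. -/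
open scoped ContDiff

noncomputable section

namespace ProjGeo

/-- The partial derivative of a function on `ℝⁿ` in the `j`-th coordinate direction. -/
def pd {n : ℕ} (j : Fin n) (f : (Fin n → ℝ) → ℝ) (p : Fin n → ℝ) : ℝ :=
  fderiv ℝ f p (Pi.single j 1)

/-- Christoffel symbols in coordinates: `Γ p i j k` represents `Γ^i_{jk}` at the point `p`. -/
abbrev Christoffel (n : ℕ) := (Fin n → ℝ) → Fin n → Fin n → Fin n → ℝ

/-- A connection is torsion-free (symmetric) if `Γ^i_{jk} = Γ^i_{kj}`. -/
def TorsionFree {n : ℕ} (Γ : Christoffel n) : Prop :=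
  ∀ p i j k, Γ p i j k = Γ p i k j

/-- Smoothness of the Christoffel symbols on the open set `U`. -/
def SmoothChristoffelOn {n : ℕ} (U : Set (Fin n → ℝ)) (Γ : Christoffel n) : Prop :=
  ∀ i j k, ContDiffOn ℝ ∞ (fun p => Γ p i j k) U

/-- `γ` is a (parameterized) geodesic of the connection `Γ` on the parameter set `I`,
staying inside `U`: it is smooth and satisfies `γ̈^i + Γ^i_{jk} γ̇^j γ̇^k = 0`. -/
def IsGeodesicOn {n : ℕ} (U : Set (Fin n → ℝ)) (Γ : Christoffel n)
    (γ : ℝ → Fin n → ℝ) (I : Set ℝ) : Prop :=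
  (∀ t ∈ I, γ t ∈ U) ∧ (∀ i, ContDiffOn ℝ ∞ (fun t => γ t i) I) ∧
  ∀ t ∈ I, ∀ i,
    deriv (fun s => deriv (fun u => γ u i) s) t
      + ∑ j, ∑ k, Γ (γ t) i j k * deriv (fun u => γ u j) t * deriv (fun u => γ u k) t = 0

/-- `h` is a smooth regular reparameterisation defined on `J` and mapping `J` bijectively
onto `I`. -/
def IsReparam (I J : Set ℝ) (h : ℝ → ℝ) : Prop :=
  ContDiffOn ℝ ∞ h J ∧ (∀ t ∈ J, deriv h t ≠ 0) ∧ Set.BijOn h J I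

/-- Two connections are projectively equivalent on `U`: each geodesic of the one is, after a
suitable reparameterisation, a geodesic of the other, and vice versa. -/
def ProjEquivOn {n : ℕ} (U : Set (Fin n → ℝ)) (Γ Γ' : Christoffel n) : Prop :=
  (∀ γ I, IsOpen I → IsGeodesicOn U Γ γ I →
    ∃ h J, IsOpen J ∧ IsReparam I J h ∧ IsGeodesicOn U Γ' (fun t => γ (h t)) J) ∧
  (∀ γ I, IsOpen I → IsGeodesicOn U Γ' γ I →
    ∃ h J, IsOpen J ∧ IsReparam I J h ∧ IsGeodesicOn U Γ (fun t => γ (h t)) J)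

/-- `Γ'` is obtained from `Γ` by the projective change associated with the 1-form `φ`:
`Γ'^i_{jk} = Γ^i_{jk} + φ_k δ^i_j + φ_j δ^i_k` on `U`. -/
def ProjChange {n : ℕ} (Γ Γ' : Christoffel n) (φ : (Fin n → ℝ) → Fin n → ℝ)
    (U : Set (Fin n → ℝ)) : Prop :=
  ∀ p ∈ U, ∀ i j k, Γ' p i j k =
    Γ p i j k + (if i = j then φ p k else 0) + (if i = k then φ p j else 0)

end ProjGeo

namespace ProjGeo

/-- The covariant derivative `K_{i,j}` of a `(0,1)`-tensor `K` of projective weight `w`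
(in the local trivialization of `(Λₙ)^{w/(n+1)}` by `(dx¹∧⋯∧dxⁿ)^{w/(n+1)}`):
`K_{i,j} = ∂_j K_i − Γ^s_{ij} K_s − (w/(n+1)) Γ^s_{sj} K_i`. -/
def covForm {n : ℕ} (w : ℝ) (Γ : Christoffel n) (K : (Fin n → ℝ) → Fin n → ℝ)
    (p : Fin n → ℝ) (i j : Fin n) : ℝ :=
  pd j (fun q => K q i) p - ∑ s, Γ p s i j * K p s
    - (w / ((n : ℝ) + 1)) * (∑ s, Γ p s s j) * K p i

/-!
Take a `Γ`-geodesic `γ` with `γ 0 = p`, `γ' 0 = v`. Projective equivalence makes `γ ∘ h` a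
`Γ'`-geodesic for a regular reparametrisation `h`; comparing second derivatives at `h t₀ = 0`
gives `(Γ' - Γ)_p(v, v) ∥ v` for every `v`. A symmetric bilinear map with this property is
`δ^s_i φ_j + δ^s_j φ_i`, i.e. `Γ'` is a projective change of `Γ`. Such a change shifts the
weight-`w` covariant derivative `K_{i,j}` by `-(1 + w) φ_j K_i - φ_i K_j`, whose symmetric part
vanishes exactly for `w = -2`.
-/

open Filter Topology Set

def quadForm {n : ℕ} (A : Fin n → Fin n → Fin n → ℝ) (v : Fin n → ℝ) : Fin n → ℝ :=
  fun s => ∑ j, ∑ k, A s j k * v j * v k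

section QuadForm

variable {n : ℕ} {A : Fin n → Fin n → Fin n → ℝ}

theorem quadForm_sub (B : Fin n → Fin n → Fin n → ℝ) (v : Fin n → ℝ) :
    quadForm (A - B) v = quadForm A v - quadForm B v := by
  ext s
  simp only [quadForm, Pi.sub_apply, ← Finset.sum_sub_distrib, sub_mul]

theorem quadForm_smul (a : ℝ) (v : Fin n → ℝ) :
    quadForm A (a • v) = a ^ 2 • quadForm A v := by
  ext s
  simp only [quadForm, Pi.smul_apply, smul_eq_mul, Finset.mul_sum]
  exact Finset.sum_congr rfl fun j _ => Finset.sum_congr rfl fun k _ => by ring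

theorem quadForm_single_add_single (hA : ∀ s i j, A s i j = A s j i) (i j : Fin n)
    (a b : ℝ) (s : Fin n) :
    quadForm A (Pi.single i a + Pi.single j b) s
      = a ^ 2 * A s i i + 2 * a * b * A s i j + b ^ 2 * A s j j := by
  simp only [quadForm, Pi.add_apply, Pi.single_apply, mul_add, add_mul, mul_ite, ite_mul,
    mul_zero, zero_mul, Finset.sum_add_distrib, Finset.sum_ite_eq', Finset.mem_univ, if_true]
  rw [hA s j i]
  ring

theorem exists_eq_delta_of_quadForm_eq_smul (hA : ∀ s i j, A s i j = A s j i)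
    (hpar : ∀ v, ∃ c : ℝ, quadForm A v = c • v) :
    ∃ φ : Fin n → ℝ, ∀ s i j,
      A s i j = (if s = i then φ j else 0) + (if s = j then φ i else 0) := by
  have hpair : ∀ i j (b : ℝ), ∃ c : ℝ, ∀ s,
      A s i i + 2 * b * A s i j + b ^ 2 * A s j j
        = c * ((if s = i then 1 else 0) + (if s = j then b else 0)) := by
    intro i j b
    obtain ⟨c, hc⟩ := hpar (Pi.single i 1 + Pi.single j b)
    refine ⟨c, fun s => ?_⟩
    have hcs := congr_fun hc s
    rw [quadForm_single_add_single hA] at hcs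
    simpa [Pi.single_apply] using hcs
  have hdiag : ∀ i s, s ≠ i → A s i i = 0 := by
    intro i s hsi
    obtain ⟨c, hc⟩ := hpair i i 0
    simpa [hsi] using hc s
  have hoff : ∀ i j s, s ≠ i → s ≠ j → A s i j = 0 := by
    intro i j s hsi hsj
    obtain ⟨c, hc⟩ := hpair i j 1
    have hcs := hc s
    simp only [hsi, hsj, hdiag i s hsi, hdiag j s hsj, if_false] at hcs
    linarith
  -- Compare the `i`- and `j`-components of `A(v, v)` for `v = e_i + b e_j` with `b = 1, 2`.
  have hmixed : ∀ i j, i ≠ j → A i i j = A j j j / 2 := by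
    intro i j hij
    have hline : ∀ b : ℝ, b ≠ 0 → 2 * A j i j + b * A j j j = A i i i + 2 * b * A i i j := by
      intro b hb
      obtain ⟨c, hc⟩ := hpair i j b
      have hi := hc i
      have hj := hc j
      simp only [hij, hij.symm, hdiag j i hij, hdiag i j hij.symm, if_true, if_false]
        at hi hj
      apply mul_left_cancel₀ hb
      linear_combination hj - b * hi
    linarith [hline 1 one_ne_zero, hline 2 two_ne_zero]
  refine ⟨fun i => A i i i / 2, fun s i j => ?_⟩
  by_cases hij : i = j
  · subst hij
    by_cases hsi : s = i
    · subst hsi; simp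
    · simp [hsi, hdiag i s hsi]
  by_cases hsi : s = i
  · subst hsi; simp [hij, hmixed s j hij]
  by_cases hsj : s = j
  · subst hsj; simp [hsi, hA s i s, hmixed s i hsi]
  simp [hsi, hsj, hoff i j s hsi hsj]

end QuadForm

theorem deriv_deriv_comp {f h : ℝ → ℝ} {t : ℝ} (hf : ContDiffAt ℝ 2 f (h t))
    (hh : ContDiffAt ℝ 2 h t) :
    deriv (deriv (f ∘ h)) t
      = deriv (deriv f) (h t) * deriv h t ^ 2 + deriv f (h t) * deriv (deriv h) t := by
  have hf_near : ∀ᶠ s in 𝓝 t, DifferentiableAt ℝ f (h s) :=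
    hh.continuousAt.eventually <|
      (hf.eventually (by simp)).mono fun y hy => hy.differentiableAt (by simp)
  have hh_near : ∀ᶠ s in 𝓝 t, DifferentiableAt ℝ h s :=
    (hh.eventually (by simp)).mono fun s hs => hs.differentiableAt (by simp)
  have hchain : deriv (f ∘ h) =ᶠ[𝓝 t] fun s => deriv f (h s) * deriv h s :=
    (hf_near.and hh_near).mono fun s hs => deriv_comp s hs.1 hs.2
  have hf' : DifferentiableAt ℝ (deriv f) (h t) :=
    (hf.derivWithin (m := 1) (by norm_num)).differentiableAt (by simp)
  have hh' : DifferentiableAt ℝ (deriv h) t :=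
    (hh.derivWithin (m := 1) (by norm_num)).differentiableAt (by simp)
  have hprod : HasDerivAt (fun s => deriv f (h s) * deriv h s)
      (deriv (deriv f) (h t) * deriv h t * deriv h t + deriv f (h t) * deriv (deriv h) t) t :=
    (hf'.hasDerivAt.comp t (hh.differentiableAt (by simp)).hasDerivAt).mul hh'.hasDerivAt
  rw [hchain.deriv_eq, hprod.deriv]
  ring

theorem contDiffOn_of_hasDerivAt_comp {E : Type*} [NormedAddCommGroup E] [NormedSpace ℝ E]
    {F : E → E} {V : Set E} {α : ℝ → E} {I : Set ℝ} (hI : IsOpen I)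
    (hF : ContDiffOn ℝ ∞ F V) (hα : ∀ t ∈ I, HasDerivAt α (F (α t)) t) (hαV : MapsTo α I V) :
    ContDiffOn ℝ ∞ α I := by
  refine contDiffOn_infty.2 fun m => ?_
  induction m with
  | zero => exact contDiffOn_zero.2 fun t ht => (hα t ht).continuousAt.continuousWithinAt
  | succ m ih =>
    rw [Nat.cast_succ, contDiffOn_succ_iff_deriv_of_isOpen hI]
    refine ⟨fun t ht => (hα t ht).differentiableAt.differentiableWithinAt, by simp, ?_⟩
    exact ((hF.of_le (by exact_mod_cast le_top)).comp ih hαV).congr fun t ht => (hα t ht).deriv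

section Geodesic

variable {n : ℕ} {U : Set (Fin n → ℝ)} {Γ Γ' : Christoffel n}

def geodesicSpray (Γ : Christoffel n) (z : (Fin n → ℝ) × (Fin n → ℝ)) :
    (Fin n → ℝ) × (Fin n → ℝ) :=
  (z.2, -quadForm (Γ z.1) z.2)

theorem SmoothChristoffelOn.contDiffOn_geodesicSpray (hsm : SmoothChristoffelOn U Γ) :
    ContDiffOn ℝ ∞ (geodesicSpray Γ) (U ×ˢ univ) := by
  refine contDiffOn_snd.prodMk (contDiffOn_pi.2 fun i => ?_)
  refine (ContDiffOn.sum fun j _ => ContDiffOn.sum fun k _ => ?_).neg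
  have hvel : ∀ m, ContDiffOn ℝ ∞ (fun z : (Fin n → ℝ) × (Fin n → ℝ) => z.2 m) (U ×ˢ univ) :=
    fun m => (contDiff_apply ℝ ℝ m).comp_contDiffOn contDiffOn_snd
  exact (((hsm i j k).comp contDiffOn_fst fun z hz => hz.1).mul (hvel j)).mul (hvel k)

theorem IsGeodesicOn.deriv_deriv {γ : ℝ → Fin n → ℝ} {I : Set ℝ} (hγ : IsGeodesicOn U Γ γ I)
    {t : ℝ} (ht : t ∈ I) (i : Fin n) :
    deriv (deriv fun u => γ u i) t
      = -quadForm (Γ (γ t)) (fun j => deriv (fun u => γ u j) t) i :=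
  eq_neg_of_add_eq_zero_left (hγ.2.2 t ht i)

theorem hasDerivAt_fst_apply_of_geodesicSpray {α : ℝ → (Fin n → ℝ) × (Fin n → ℝ)} {t : ℝ}
    (hα : HasDerivAt α (geodesicSpray Γ (α t)) t) (i : Fin n) :
    HasDerivAt (fun s => (α s).1 i) ((α t).2 i) t :=
  hasDerivAt_pi.1 hα.fst i

theorem hasDerivAt_snd_apply_of_geodesicSpray {α : ℝ → (Fin n → ℝ) × (Fin n → ℝ)} {t : ℝ}
    (hα : HasDerivAt α (geodesicSpray Γ (α t)) t) (i : Fin n) :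
    HasDerivAt (fun s => (α s).2 i) (-quadForm (Γ (α t).1) (α t).2 i) t :=
  hasDerivAt_pi.1 hα.snd i

theorem isGeodesicOn_of_hasDerivAt_geodesicSpray (hsm : SmoothChristoffelOn U Γ)
    {α : ℝ → (Fin n → ℝ) × (Fin n → ℝ)} {I : Set ℝ} (hI : IsOpen I)
    (hα : ∀ t ∈ I, HasDerivAt α (geodesicSpray Γ (α t)) t) (hαU : MapsTo α I (U ×ˢ univ)) :
    IsGeodesicOn U Γ (fun t => (α t).1) I := by
  have hsmooth := contDiffOn_of_hasDerivAt_comp hI hsm.contDiffOn_geodesicSpray hα hαU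
  refine ⟨fun t ht => (hαU ht).1, fun i => ?_, fun t ht i => ?_⟩
  · exact (contDiff_apply ℝ ℝ i).comp_contDiffOn (contDiffOn_fst.comp hsmooth (mapsTo_univ _ _))
  have hvel : ∀ j, deriv (fun s => (α s).1 j) =ᶠ[𝓝 t] fun s => (α s).2 j := fun j =>
    eventually_of_mem (hI.mem_nhds ht) fun s hs =>
      (hasDerivAt_fst_apply_of_geodesicSpray (hα s hs) j).deriv
  rw [hvel i |>.deriv_eq, (hasDerivAt_snd_apply_of_geodesicSpray (hα t ht) i).deriv]
  simp only [fun j => (hvel j).eq_of_nhds]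
  exact neg_add_cancel _

theorem exists_isGeodesicOn (hU : IsOpen U) (hsm : SmoothChristoffelOn U Γ)
    {p : Fin n → ℝ} (hp : p ∈ U) (v : Fin n → ℝ) :
    ∃ (γ : ℝ → Fin n → ℝ) (ε : ℝ), 0 < ε ∧ γ 0 = p ∧
      (∀ i, deriv (fun t => γ t i) 0 = v i) ∧ IsGeodesicOn U Γ γ (Ioo (-ε) ε) := by
  have hV : U ×ˢ univ ∈ 𝓝 (p, v) := (hU.prod isOpen_univ).mem_nhds ⟨hp, trivial⟩
  have hC1 : ContDiffAt ℝ 1 (geodesicSpray Γ) (p, v) :=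
    (hsm.contDiffOn_geodesicSpray.contDiffAt hV).of_le (by decide)
  obtain ⟨α, hα0, ε₀, hε₀, hα⟩ :=
    hC1.exists_forall_mem_closedBall_exists_eq_forall_mem_Ioo_hasDerivAt₀ 0
  have hnear : α ⁻¹' (U ×ˢ univ) ∩ Ioo (0 - ε₀) (0 + ε₀) ∈ 𝓝 (0 : ℝ) :=
    inter_mem ((hα 0 (by simpa using hε₀)).continuousAt.preimage_mem_nhds (hα0 ▸ hV))
      (Ioo_mem_nhds (by linarith) (by linarith))
  obtain ⟨ε, hε, hball⟩ := Metric.mem_nhds_iff.1 hnear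
  rw [Real.ball_eq_Ioo, zero_sub, zero_add] at hball
  have hαε : ∀ t ∈ Ioo (-ε) ε, HasDerivAt α (geodesicSpray Γ (α t)) t :=
    fun t ht => hα t (hball ht).2
  refine ⟨fun t => (α t).1, ε, hε, by simp [hα0], fun i => ?_,
    isGeodesicOn_of_hasDerivAt_geodesicSpray hsm isOpen_Ioo hαε fun t ht => (hball ht).1⟩
  rw [(hasDerivAt_fst_apply_of_geodesicSpray (hαε 0 ⟨neg_lt_zero.2 hε, hε⟩) i).deriv, hα0]

end Geodesic

section ProjectiveChange

variable {n : ℕ} {U : Set (Fin n → ℝ)} {Γ Γ' : Christoffel n}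

/-- Differentiating `σ = γ ∘ h` twice at `h t₀ = 0` gives `a² Γ'(v, v) = a² Γ(v, v) - b v`
with `a = h'(t₀) ≠ 0` and `b = h''(t₀)`. -/
theorem exists_quadForm_sub_eq_smul_of_projEquivOn (hU : IsOpen U)
    (hsm : SmoothChristoffelOn U Γ) (hproj : ProjEquivOn U Γ Γ') {p : Fin n → ℝ} (hp : p ∈ U)
    (v : Fin n → ℝ) : ∃ c : ℝ, quadForm (Γ' p - Γ p) v = c • v := by
  obtain ⟨γ, ε, hε, hγ0, hγ'0, hγ⟩ := exists_isGeodesicOn hU hsm hp v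
  obtain ⟨h, J, hJ, ⟨hh, hh', hbij⟩, hσ⟩ := hproj.1 γ _ isOpen_Ioo hγ
  obtain ⟨t₀, ht₀, hht₀⟩ := hbij.surjOn ⟨neg_lt_zero.2 hε, hε⟩
  have hγ2 : ∀ i, ContDiffAt ℝ 2 (fun u => γ u i) (h t₀) := fun i =>
    ((hγ.2.1 i).contDiffAt (isOpen_Ioo.mem_nhds (hbij.mapsTo ht₀))).of_le (by decide)
  have hh2 : ContDiffAt ℝ 2 h t₀ := (hh.contDiffAt (hJ.mem_nhds ht₀)).of_le (by decide)
  set a := deriv h t₀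
  set b := deriv (deriv h) t₀
  have hvel : (fun j => deriv (fun u => γ (h u) j) t₀) = a • v := by
    ext j
    rw [Pi.smul_apply, smul_eq_mul, ← hγ'0 j, ← hht₀, mul_comm]
    exact deriv_comp t₀ ((hγ2 j).differentiableAt (by simp)) (hh2.differentiableAt (by simp))
  have hacc : ∀ i, deriv (deriv fun u => γ (h u) i) t₀
      = -quadForm (Γ p) v i * a ^ 2 + v i * b := by
    intro i
    have hvel₀ : (fun j => deriv (fun u => γ u j) 0) = v := funext hγ'0
    rw [← hγ'0 i, ← hvel₀, ← hγ0, ← hγ.deriv_deriv ⟨neg_lt_zero.2 hε, hε⟩, ← hht₀]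
    exact deriv_deriv_comp (hγ2 i) hh2
  refine ⟨-b / a ^ 2, funext fun i => ?_⟩
  have hσi := hσ.deriv_deriv ht₀ i
  rw [hacc, hvel, hht₀, hγ0, quadForm_smul, Pi.smul_apply, smul_eq_mul] at hσi
  have ha : a ^ 2 ≠ 0 := pow_ne_zero 2 (hh' t₀ ht₀)
  rw [quadForm_sub, Pi.sub_apply, Pi.smul_apply, smul_eq_mul, div_mul_eq_mul_div, eq_div_iff ha]
  linear_combination hσi

theorem exists_projChange_of_projEquivOn (hU : IsOpen U) (hTF : TorsionFree Γ)
    (hTF' : TorsionFree Γ') (hsm : SmoothChristoffelOn U Γ) (hproj : ProjEquivOn U Γ Γ') :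
    ∃ φ, ProjChange Γ Γ' φ U := by
  have hpoint : ∀ p, ∃ φ : Fin n → ℝ, p ∈ U → ∀ i j k,
      Γ' p i j k = Γ p i j k + (if i = j then φ k else 0) + (if i = k then φ j else 0) := by
    intro p
    by_cases hp : p ∈ U
    · obtain ⟨φ, hφ⟩ := exists_eq_delta_of_quadForm_eq_smul
        (fun s i j => by simp only [Pi.sub_apply, hTF p s i j, hTF' p s i j])
        (exists_quadForm_sub_eq_smul_of_projEquivOn hU hsm hproj hp)
      refine ⟨φ, fun _ i j k => ?_⟩
      rw [add_assoc, ← hφ i j k, Pi.sub_apply, Pi.sub_apply, Pi.sub_apply, add_sub_cancel]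
    · exact ⟨0, fun h => absurd h hp⟩
  choose φ hφ using hpoint
  exact ⟨φ, hφ⟩

theorem covForm_of_projChange {φ : (Fin n → ℝ) → Fin n → ℝ} (hφ : ProjChange Γ Γ' φ U)
    {p : Fin n → ℝ} (hp : p ∈ U) (w : ℝ) (K : (Fin n → ℝ) → Fin n → ℝ) (i j : Fin n) :
    covForm w Γ' K p i j = covForm w Γ K p i j - (1 + w) * φ p j * K p i - φ p i * K p j := by
  have hK : ∑ s, Γ' p s i j * K p s = ∑ s, Γ p s i j * K p s + φ p j * K p i + φ p i * K p j := by
    simp only [hφ p hp, add_mul, ite_mul, zero_mul, Finset.sum_add_distrib, Finset.sum_ite_eq',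
      Finset.mem_univ, if_true]
  have htrace : ∑ s, Γ' p s s j = ∑ s, Γ p s s j + ((n : ℝ) + 1) * φ p j := by
    simp only [hφ p hp, Finset.sum_add_distrib, Finset.sum_ite_eq', Finset.mem_univ, if_true,
      Finset.sum_const, Finset.card_univ, Fintype.card_fin, nsmul_eq_mul]
    ring
  simp only [covForm, hK, htrace]
  field_simp
  ring

end ProjectiveChange

theorem statement_4_general {n : ℕ} (U : Set (Fin n → ℝ)) (hU : IsOpen U)
    (Γ Γ' : Christoffel n) (hTF : TorsionFree Γ) (hTF' : TorsionFree Γ')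
    (hsm : SmoothChristoffelOn U Γ)
    (hproj : ProjEquivOn U Γ Γ')
    (K : (Fin n → ℝ) → Fin n → ℝ) :
    ∀ p ∈ U, ∀ i j,
      covForm (-2) Γ' K p i j + covForm (-2) Γ' K p j i
        = covForm (-2) Γ K p i j + covForm (-2) Γ K p j i := by
  obtain ⟨φ, hφ⟩ := exists_projChange_of_projEquivOn hU hTF hTF' hsm hproj
  intro p hp i j
  simp only [covForm_of_projChange hφ hp]
  ring

/-- **Eastwood.** For 1-forms of projective weight `−2` the operator
`K ↦ Symmetrization(∇K)`, in indices `K_i ↦ K_{i,j} + K_{j,i}`, is projectively invariant: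
if `∇` and `∇̄` are projectively equivalent torsion-free connections, the symmetrized
covariant derivatives agree. -/
theorem statement_4 {n : ℕ} (hn : 2 ≤ n) (U : Set (Fin n → ℝ)) (hU : IsOpen U)
    (Γ Γ' : Christoffel n) (hTF : TorsionFree Γ) (hTF' : TorsionFree Γ')
    (hsm : SmoothChristoffelOn U Γ) (hsm' : SmoothChristoffelOn U Γ')
    (hproj : ProjEquivOn U Γ Γ')
    (K : (Fin n → ℝ) → Fin n → ℝ) (hK : ∀ i, ContDiffOn ℝ ∞ (fun p => K p i) U) :
    ∀ p ∈ U, ∀ i j,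
      covForm (-2) Γ' K p i j + covForm (-2) Γ' K p j i
        = covForm (-2) Γ K p i j + covForm (-2) Γ K p j i :=
  statement_4_general U hU Γ Γ' hTF hTF' hsm hproj K

end ProjGeo
end
end

section
/- Let [∇] be a projective class of torsion-free affine connections on an oriented n-dimensional manifold M (n ≥ 2). If the Levi-Civita connection of a pseudo-Riemannian metric g lies in [∇], then the weighted tensor σ^{ij} := g^{ij} ⊗ (Vol_g)^{2/(n+1)} (a symmetric (2,0)-tensor of projective weight 2) satisfies the metrisability equation: the trace-free part of ∇σ vanishes, i.e., σ^{ij}_{,k} − (1/(n+1))(σ^{is}_{,s} δ^j_k + σ^{js}_{,s} δ^i_k) = 0. Conversely, for every solution σ of this equation with det(σ) ≠ 0 there exists a pseudo-Riemannian metric g whose Levi-Civita connection lies in [∇] and such that σ^{ij} = g^{ij} ⊗ (Vol_g)^{2/(n+1)}. -/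
open scoped ContDiff

noncomputable section

namespace ProjGeo

/-- The covariant derivative `v^i_{,j}` of a `(1,0)`-tensor `v` of projective weight `w`:
`v^i_{,j} = ∂_j v^i + Γ^i_{sj} v^s − (w/(n+1)) Γ^s_{sj} v^i`. -/
def covVec {n : ℕ} (w : ℝ) (Γ : Christoffel n) (v : (Fin n → ℝ) → Fin n → ℝ)
    (p : Fin n → ℝ) (i j : Fin n) : ℝ :=
  pd j (fun q => v q i) p + ∑ s, Γ p i s j * v p s
    - (w / ((n : ℝ) + 1)) * (∑ s, Γ p s s j) * v p i

/-- The covariant derivative `σ^{ij}_{,k}` of a `(2,0)`-tensor `σ` of projective weight `w`: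
`σ^{ij}_{,k} = ∂_k σ^{ij} + Γ^i_{sk} σ^{sj} + Γ^j_{sk} σ^{is} − (w/(n+1)) Γ^s_{sk} σ^{ij}`. -/
def covVec2 {n : ℕ} (w : ℝ) (Γ : Christoffel n) (σ : (Fin n → ℝ) → Fin n → Fin n → ℝ)
    (p : Fin n → ℝ) (i j k : Fin n) : ℝ :=
  pd k (fun q => σ q i j) p + ∑ s, Γ p i s k * σ p s j + ∑ s, Γ p j s k * σ p i s
    - (w / ((n : ℝ) + 1)) * (∑ s, Γ p s s k) * σ p i j

/-- The trace-free part of the covariant derivative of a weight-2 symmetric `(2,0)`-tensor: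
`σ^{ij}_{,k} − (1/(n+1))(σ^{is}_{,s} δ^j_k + σ^{js}_{,s} δ^i_k)`; the metrisability
operator. -/
def mOp {n : ℕ} (Γ : Christoffel n) (σ : (Fin n → ℝ) → Fin n → Fin n → ℝ)
    (p : Fin n → ℝ) (i j k : Fin n) : ℝ :=
  covVec2 2 Γ σ p i j k - (1 / ((n : ℝ) + 1)) *
    ((∑ s, covVec2 2 Γ σ p i s s) * (if j = k then 1 else 0)
      + (∑ s, covVec2 2 Γ σ p j s s) * (if i = k then 1 else 0))

end ProjGeo

namespace ProjGeo

/-- A (pseudo-Riemannian) metric on `U` in coordinates: a smooth symmetric nondegenerate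
matrix-valued function. -/
def MetricOn {n : ℕ} (U : Set (Fin n → ℝ))
    (g : (Fin n → ℝ) → Matrix (Fin n) (Fin n) ℝ) : Prop :=
  (∀ i j, ContDiffOn ℝ ∞ (fun p => g p i j) U) ∧
  (∀ p ∈ U, ∀ i j, g p i j = g p j i) ∧
  (∀ p ∈ U, (g p).det ≠ 0)

/-- A Riemannian (positive definite) metric on `U` in coordinates. -/
def RiemannianOn {n : ℕ} (U : Set (Fin n → ℝ))
    (g : (Fin n → ℝ) → Matrix (Fin n) (Fin n) ℝ) : Prop :=
  MetricOn U g ∧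
  ∀ p ∈ U, ∀ v : Fin n → ℝ, v ≠ 0 → 0 < ∑ i, ∑ j, g p i j * v i * v j

/-- The Christoffel symbols of the Levi-Civita connection of the metric `g`:
`Γ^i_{jk} = ½ g^{is} (∂_j g_{sk} + ∂_k g_{sj} − ∂_s g_{jk})`. -/
def LeviCivita {n : ℕ} (g : (Fin n → ℝ) → Matrix (Fin n) (Fin n) ℝ) : Christoffel n :=
  fun p i j k => (1 / 2) * ∑ s, (g p)⁻¹ i s *
    (pd j (fun q => g q s k) p + pd k (fun q => g q s j) p - pd s (fun q => g q j k) p)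

end ProjGeo

namespace ProjGeo

/-- The solution of the metrisability equation corresponding to a metric `g`:
`σ^{ij} = g^{ij} ⊗ (Vol_g)^{2/(n+1)}`, which in the local trivialization by
`(dx¹∧⋯∧dxⁿ)^{2/(n+1)}` reads `σ^{ij} = g^{ij} |det g|^{1/(n+1)}`. -/
def sigmaOf {n : ℕ} (g : (Fin n → ℝ) → Matrix (Fin n) (Fin n) ℝ) :
    (Fin n → ℝ) → Fin n → Fin n → ℝ :=
  fun p i j => (g p)⁻¹ i j * |(g p).det| ^ (1 / ((n : ℝ) + 1))

end ProjGeo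

/-! In a chart, read `σ^{ij}_{,k}` at fixed `k` as a matrix. For a nondegenerate `A^{ij}`, Jacobi's
formula shows that the weight-2 tensor `σ = |det A|^{-1/(n+1)} A` has
`∇_k σ = |det A|^{-1/(n+1)} (X − tr(A⁻¹X)/(n+1) · A)` with `X = ∇_k A`, so `σ` is parallel iff `A`
is; and `A = g⁻¹` is parallel iff `g` is, which by the Koszul formula singles out the Levi-Civita
connection of `g` among torsion-free connections.

The metrisability operator is projectively invariant, so a metric whose Levi-Civita connection lies
in `[∇]` gives a solution. Conversely, a solution `σ` is parallel for the connection of `[∇]` shifted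
by `φ = −σ⁻¹ σ^{·s}_{,s}/(n+1)`, which is therefore the Levi-Civita connection of
`g = (|det σ| σ)⁻¹`, and `σ = |det g⁻¹|^{-1/(n+1)} g⁻¹` is the tensor attached to `g`. -/

namespace ProjGeo

open Filter Topology Matrix

section Calculus

variable {n : ℕ} {p : Fin n → ℝ} {k : Fin n} {f g : (Fin n → ℝ) → ℝ}

lemma pd_congr_nhds (h : f =ᶠ[𝓝 p] g) : pd k f p = pd k g p := by
  rw [pd, pd, h.fderiv_eq]

lemma pd_const (c : ℝ) : pd k (fun _ => c) p = 0 := by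
  simp [pd]

lemma pd_mul (hf : DifferentiableAt ℝ f p) (hg : DifferentiableAt ℝ g p) :
    pd k (fun q => f q * g q) p = pd k f p * g p + f p * pd k g p := by
  simp [pd, fderiv_fun_mul hf hg]
  ring

lemma pd_const_mul (c : ℝ) (hf : DifferentiableAt ℝ f p) :
    pd k (fun q => c * f q) p = c * pd k f p := by
  simp [pd, fderiv_const_mul hf]

lemma pd_sum {ι : Type*} (s : Finset ι) (F : ι → (Fin n → ℝ) → ℝ)
    (hF : ∀ i ∈ s, DifferentiableAt ℝ (F i) p) :
    pd k (fun q => ∑ i ∈ s, F i q) p = ∑ i ∈ s, pd k (F i) p := by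
  simp [pd, fderiv_fun_sum hF]

lemma pd_prod {ι : Type*} [DecidableEq ι] (s : Finset ι) (F : ι → (Fin n → ℝ) → ℝ)
    (hF : ∀ i ∈ s, DifferentiableAt ℝ (F i) p) :
    pd k (fun q => ∏ i ∈ s, F i q) p = ∑ i ∈ s, (∏ j ∈ s.erase i, F j p) * pd k (F i) p := by
  simp [pd, fderiv_finsetProd hF]

lemma pd_comp {F : ℝ → ℝ} {F' : ℝ} (hF : HasDerivAt F F' (f p)) (hf : DifferentiableAt ℝ f p) :
    pd k (fun q => F (f q)) p = F' * pd k f p := by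
  rw [pd, pd, show (fun q => F (f q)) = F ∘ f from rfl,
    (hF.comp_hasFDerivAt p hf.hasFDerivAt).fderiv]
  simp

lemma hasDerivAt_abs_rpow {x : ℝ} (hx : x ≠ 0) (c : ℝ) :
    HasDerivAt (fun y => |y| ^ c) (c * |x| ^ c / x) x := by
  convert (hasDerivAt_abs hx).rpow_const (p := c) (Or.inl (abs_ne_zero.2 hx)) using 1
  rw [Real.rpow_sub_one (abs_ne_zero.2 hx)]
  rcases hx.lt_or_gt with h | h <;> simp [h, abs_of_neg, abs_of_pos] <;> field_simp

end Calculus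

section MatrixCalculus

variable {n : ℕ} {p : Fin n → ℝ} {k : Fin n} {M N : (Fin n → ℝ) → Matrix (Fin n) (Fin n) ℝ}

def pdMat (k : Fin n) (M : (Fin n → ℝ) → Matrix (Fin n) (Fin n) ℝ) (p : Fin n → ℝ) :
    Matrix (Fin n) (Fin n) ℝ :=
  Matrix.of fun a b => pd k (fun q => M q a b) p

lemma pdMat_congr_nhds (h : M =ᶠ[𝓝 p] N) : pdMat k M p = pdMat k N p := by
  ext a b
  exact pd_congr_nhds (h.mono fun q hq => congrFun (congrFun hq a) b)

lemma pdMat_const (A : Matrix (Fin n) (Fin n) ℝ) : pdMat k (fun _ => A) p = 0 := by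
  ext a b
  exact pd_const _

lemma pdMat_mul (hM : ∀ a b, DifferentiableAt ℝ (fun q => M q a b) p)
    (hN : ∀ a b, DifferentiableAt ℝ (fun q => N q a b) p) :
    pdMat k (fun q => M q * N q) p = pdMat k M p * N p + M p * pdMat k N p := by
  ext a b
  simp only [pdMat, Matrix.mul_apply, Matrix.of_apply, Matrix.add_apply,
    ← Finset.sum_add_distrib]
  rw [pd_sum _ (fun s q => M q a s * N q s b) fun s _ => (hM a s).mul (hN s b)]
  exact Finset.sum_congr rfl fun s _ => pd_mul (hM a s) (hN s b)

lemma differentiableAt_det (hM : ∀ a b, DifferentiableAt ℝ (fun q => M q a b) p) :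
    DifferentiableAt ℝ (fun q => (M q).det) p := by
  simp only [Matrix.det_apply]
  fun_prop

lemma contDiffAt_det {m : WithTop ℕ∞} (hM : ∀ a b, ContDiffAt ℝ m (fun q => M q a b) p) :
    ContDiffAt ℝ m (fun q => (M q).det) p := by
  simp only [Matrix.det_apply]
  fun_prop

lemma inv_apply_eq (A : Matrix (Fin n) (Fin n) ℝ) (i j : Fin n) :
    A⁻¹ i j = (A.det)⁻¹ * (A.updateRow j (Pi.single i 1)).det := by
  rw [Matrix.inv_def, Ring.inverse_eq_inv', Matrix.smul_apply, smul_eq_mul,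
    Matrix.adjugate_apply]

lemma inv_apply_comm_of_symm {A : Matrix (Fin n) (Fin n) ℝ}
    (h : ∀ a b, A a b = A b a) (a b : Fin n) : A⁻¹ a b = A⁻¹ b a :=
  (Matrix.IsSymm.ext_iff.2 fun i j => h j i).inv.apply b a

lemma sum_smul_vecMul_inv_mul {A : Matrix (Fin n) (Fin n) ℝ} (hA : A.det ≠ 0)
    (c : ℝ) (μ : Fin n → ℝ) (x : Fin n) :
    ∑ s, (c • Matrix.vecMul μ A⁻¹) s * A s x = c * μ x := by
  have h : Matrix.vecMul (c • Matrix.vecMul μ A⁻¹) A = c • μ := by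
    rw [Matrix.smul_vecMul, Matrix.vecMul_vecMul, Matrix.nonsing_inv_mul _ hA.isUnit,
      Matrix.vecMul_one]
  exact congrFun h x

lemma differentiableAt_inv_apply (hM : ∀ a b, DifferentiableAt ℝ (fun q => M q a b) p)
    (hdet : (M p).det ≠ 0) (i j : Fin n) :
    DifferentiableAt ℝ (fun q => (M q)⁻¹ i j) p := by
  simp only [inv_apply_eq]
  refine ((differentiableAt_det hM).inv hdet).mul
    (differentiableAt_det (M := fun q => (M q).updateRow j (Pi.single i 1)) fun a b => ?_)
  simp only [Matrix.updateRow_apply]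
  split_ifs <;> fun_prop

lemma contDiffAt_inv_apply {m : WithTop ℕ∞} (hM : ∀ a b, ContDiffAt ℝ m (fun q => M q a b) p)
    (hdet : (M p).det ≠ 0) (i j : Fin n) :
    ContDiffAt ℝ m (fun q => (M q)⁻¹ i j) p := by
  simp only [inv_apply_eq]
  refine ((contDiffAt_det hM).inv hdet).mul
    (contDiffAt_det (M := fun q => (M q).updateRow j (Pi.single i 1)) fun a b => ?_)
  simp only [Matrix.updateRow_apply]
  split_ifs <;> fun_prop

/-- Differentiate `M * M⁻¹ = 1`, which holds near `p`. -/
lemma pdMat_inv (hM : ∀ a b, DifferentiableAt ℝ (fun q => M q a b) p) (hdet : (M p).det ≠ 0) :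
    pdMat k (fun q => (M q)⁻¹) p = -((M p)⁻¹ * pdMat k M p * (M p)⁻¹) := by
  have hunit : IsUnit (M p).det := hdet.isUnit
  have hone : (fun q => M q * (M q)⁻¹) =ᶠ[𝓝 p] fun _ => 1 :=
    ((differentiableAt_det hM).continuousAt.eventually_ne hdet).mono
      fun q hq => Matrix.mul_nonsing_inv _ hq.isUnit
  have hprod := pdMat_congr_nhds (k := k) hone
  rw [pdMat_mul hM (differentiableAt_inv_apply hM hdet), pdMat_const] at hprod
  calc pdMat k (fun q => (M q)⁻¹) p
      = (M p)⁻¹ * (M p * pdMat k (fun q => (M q)⁻¹) p) := by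
        rw [Matrix.nonsing_inv_mul_cancel_left _ _ hunit]
    _ = -((M p)⁻¹ * pdMat k M p * (M p)⁻¹) := by
        rw [eq_neg_of_add_eq_zero_right hprod]
        simp [Matrix.mul_assoc]

lemma pd_det (hM : ∀ a b, DifferentiableAt ℝ (fun q => M q a b) p) :
    pd k (fun q => (M q).det) p = ((M p).adjugate * pdMat k M p).trace := by
  have hcol : ∀ b, ((M p).adjugate * pdMat k M p) b b
      = ∑ σ : Equiv.Perm (Fin n), ((Equiv.Perm.sign σ : ℤ) : ℝ) *
          ((∏ c ∈ Finset.univ.erase b, M p (σ c) c) * pd k (fun q => M q (σ b) b) p) := by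
    intro b
    -- Cramer: column `b` of `adj M * D` is `det` of `M` with column `b` replaced by `D_{·b}`.
    have h := congrFun (Matrix.cramer_eq_adjugate_mulVec (M p) fun a => pdMat k M p a b) b
    rw [Matrix.cramer_apply, Matrix.det_apply'] at h
    rw [show ((M p).adjugate * pdMat k M p) b b
      = ((M p).adjugate *ᵥ fun a => pdMat k M p a b) b from rfl, ← h]
    refine Finset.sum_congr rfl fun σ _ => ?_
    rw [← Finset.mul_prod_erase _ _ (Finset.mem_univ b), Matrix.updateCol_self,
      Finset.prod_congr rfl fun c hc => Matrix.updateCol_ne (M := M p) (Finset.ne_of_mem_erase hc)]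
    simp only [pdMat, Matrix.of_apply]
    ring
  simp_rw [Matrix.det_apply']
  rw [pd_sum _ _ fun σ _ => by fun_prop, Matrix.trace]
  simp only [Matrix.diag, hcol]
  rw [Finset.sum_comm]
  refine Finset.sum_congr rfl fun σ _ => ?_
  rw [pd_const_mul _ (by fun_prop), pd_prod _ _ fun c _ => hM (σ c) c, Finset.mul_sum]

lemma pd_abs_det_rpow (hM : ∀ a b, DifferentiableAt ℝ (fun q => M q a b) p)
    (hdet : (M p).det ≠ 0) (c : ℝ) :
    pd k (fun q => |(M q).det| ^ c) p = c * |(M p).det| ^ c * ((M p)⁻¹ * pdMat k M p).trace := by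
  rw [pd_comp (hasDerivAt_abs_rpow hdet c) (differentiableAt_det hM), pd_det hM,
    Matrix.inv_def, Ring.inverse_eq_inv', Matrix.smul_mul, Matrix.trace_smul, smul_eq_mul]
  ring

lemma pdMat_smul {f : (Fin n → ℝ) → ℝ} (hf : DifferentiableAt ℝ f p)
    (hM : ∀ a b, DifferentiableAt ℝ (fun q => M q a b) p) :
    pdMat k (fun q => f q • M q) p = pd k f p • M p + f p • pdMat k M p := by
  ext a b
  exact pd_mul hf (hM a b)

end MatrixCalculus

section Covariant

variable {n : ℕ} {p : Fin n → ℝ} {k : Fin n} {M : (Fin n → ℝ) → Matrix (Fin n) (Fin n) ℝ}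

def connMat (Γ : Christoffel n) (p : Fin n → ℝ) (k : Fin n) : Matrix (Fin n) (Fin n) ℝ :=
  Matrix.of fun i s => Γ p i s k

def covVec2Mat (w : ℝ) (Γ : Christoffel n) (σ : (Fin n → ℝ) → Matrix (Fin n) (Fin n) ℝ)
    (p : Fin n → ℝ) (k : Fin n) : Matrix (Fin n) (Fin n) ℝ :=
  Matrix.of fun i j => covVec2 w Γ σ p i j k

/-- `g_{ab,k} = ∂_k g_{ab} − Γ^s_{ak} g_{sb} − Γ^s_{bk} g_{as}` for an unweighted `g`. -/
def covCovec2Mat (Γ : Christoffel n) (g : (Fin n → ℝ) → Matrix (Fin n) (Fin n) ℝ)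
    (p : Fin n → ℝ) (k : Fin n) : Matrix (Fin n) (Fin n) ℝ :=
  pdMat k g p - (connMat Γ p k)ᵀ * g p - g p * connMat Γ p k

lemma covVec2Mat_eq (w : ℝ) (Γ : Christoffel n) (σ : (Fin n → ℝ) → Matrix (Fin n) (Fin n) ℝ) :
    covVec2Mat w Γ σ p k = pdMat k σ p + connMat Γ p k * σ p + σ p * (connMat Γ p k)ᵀ
      - (w / ((n : ℝ) + 1) * (connMat Γ p k).trace) • σ p := by
  ext i j
  simp only [covVec2Mat, covVec2, pdMat, connMat, Matrix.of_apply, Matrix.add_apply,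
    Matrix.sub_apply, Matrix.mul_apply, Matrix.transpose_apply, Matrix.smul_apply, smul_eq_mul,
    Matrix.trace, Matrix.diag]
  simp_rw [mul_comm (σ p i _)]

lemma covVec2Mat_congr_nhds (w : ℝ) (Γ : Christoffel n)
    {σ σ' : (Fin n → ℝ) → Matrix (Fin n) (Fin n) ℝ} (h : σ =ᶠ[𝓝 p] σ') :
    covVec2Mat w Γ σ p k = covVec2Mat w Γ σ' p k := by
  rw [covVec2Mat_eq, covVec2Mat_eq, pdMat_congr_nhds h, h.self_of_nhds]

lemma covVec2Mat_inv (Γ : Christoffel n) (hM : ∀ a b, DifferentiableAt ℝ (fun q => M q a b) p)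
    (hdet : (M p).det ≠ 0) :
    covVec2Mat 0 Γ (fun q => (M q)⁻¹) p k = -((M p)⁻¹ * covCovec2Mat Γ M p k * (M p)⁻¹) := by
  have hunit : IsUnit (M p).det := hdet.isUnit
  rw [covVec2Mat_eq, covCovec2Mat, pdMat_inv hM hdet]
  simp only [zero_div, zero_mul, zero_smul, sub_zero, Matrix.mul_sub, Matrix.sub_mul,
    Matrix.mul_assoc, Matrix.nonsing_inv_mul_cancel_left _ _ hunit, Matrix.mul_nonsing_inv _ hunit,
    Matrix.mul_one]
  abel

lemma covCovec2Mat_inv (Γ : Christoffel n) (hM : ∀ a b, DifferentiableAt ℝ (fun q => M q a b) p)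
    (hdet : (M p).det ≠ 0) :
    covCovec2Mat Γ (fun q => (M q)⁻¹) p k = -((M p)⁻¹ * covVec2Mat 0 Γ M p k * (M p)⁻¹) := by
  have hunit : IsUnit (M p).det := hdet.isUnit
  rw [covVec2Mat_eq, covCovec2Mat, pdMat_inv hM hdet]
  simp only [zero_div, zero_mul, zero_smul, sub_zero, Matrix.mul_add, Matrix.add_mul,
    Matrix.mul_assoc, Matrix.nonsing_inv_mul_cancel_left _ _ hunit, Matrix.mul_nonsing_inv _ hunit,
    Matrix.mul_one]
  abel

lemma covVec2Mat_smul (w : ℝ) (Γ : Christoffel n) {f : (Fin n → ℝ) → ℝ}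
    (hf : DifferentiableAt ℝ f p) (hM : ∀ a b, DifferentiableAt ℝ (fun q => M q a b) p) :
    covVec2Mat w Γ (fun q => f q • M q) p k = f p • covVec2Mat 0 Γ M p k
      + (pd k f p - w / ((n : ℝ) + 1) * (connMat Γ p k).trace * f p) • M p := by
  rw [covVec2Mat_eq, covVec2Mat_eq, pdMat_smul hf hM]
  simp only [Matrix.mul_smul, Matrix.smul_mul]
  module

lemma trace_inv_mul_covVec2Mat (Γ : Christoffel n) (hdet : (M p).det ≠ 0) :
    ((M p)⁻¹ * covVec2Mat 0 Γ M p k).trace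
      = ((M p)⁻¹ * pdMat k M p).trace + 2 * (connMat Γ p k).trace := by
  have hunit : IsUnit (M p).det := hdet.isUnit
  rw [covVec2Mat_eq]
  simp only [zero_div, zero_mul, zero_smul, sub_zero, Matrix.mul_add, Matrix.trace_add,
    ← Matrix.mul_assoc, Matrix.nonsing_inv_mul _ hunit, Matrix.one_mul, Matrix.trace_transpose]
  rw [Matrix.trace_mul_cycle, Matrix.mul_nonsing_inv _ hunit, Matrix.one_mul]
  ring

def sigmaOfInverse (A : (Fin n → ℝ) → Matrix (Fin n) (Fin n) ℝ) :
    (Fin n → ℝ) → Matrix (Fin n) (Fin n) ℝ :=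
  fun q => |(A q).det| ^ (-1 / ((n : ℝ) + 1)) • A q

lemma sigmaOf_eq_sigmaOfInverse (g : (Fin n → ℝ) → Matrix (Fin n) (Fin n) ℝ) :
    sigmaOf g = sigmaOfInverse fun q => (g q)⁻¹ := by
  funext q i j
  rw [sigmaOf, sigmaOfInverse, Matrix.smul_apply, smul_eq_mul, mul_comm, Matrix.det_nonsing_inv,
    Ring.inverse_eq_inv', abs_inv, Real.inv_rpow (abs_nonneg _), neg_div, Real.rpow_neg
    (abs_nonneg _), inv_inv]

lemma sigmaOfInverse_abs_det_smul {τ : (Fin n → ℝ) → Matrix (Fin n) (Fin n) ℝ}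
    {q : Fin n → ℝ} (hdet : (τ q).det ≠ 0) :
    sigmaOfInverse (fun q => |(τ q).det| • τ q) q = τ q := by
  have habs : 0 < |(τ q).det| := abs_pos.2 hdet
  rw [sigmaOfInverse, Matrix.det_smul, Fintype.card_fin, abs_mul, abs_pow, abs_abs, ← pow_succ,
    ← Real.rpow_natCast, ← Real.rpow_mul habs.le, smul_smul]
  rw [show ((n + 1 : ℕ) : ℝ) * (-1 / ((n : ℝ) + 1)) = -1 by push_cast; field_simp,
    Real.rpow_neg_one, inv_mul_cancel₀ habs.ne', one_smul]

lemma covVec2Mat_sigmaOfInverse (Γ : Christoffel n)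
    (hM : ∀ a b, DifferentiableAt ℝ (fun q => M q a b) p) (hdet : (M p).det ≠ 0) :
    covVec2Mat 2 Γ (sigmaOfInverse M) p k = |(M p).det| ^ (-1 / ((n : ℝ) + 1)) •
      (covVec2Mat 0 Γ M p k - (((M p)⁻¹ * covVec2Mat 0 Γ M p k).trace / ((n : ℝ) + 1)) • M p) := by
  have hf : DifferentiableAt ℝ (fun q => |(M q).det| ^ (-1 / ((n : ℝ) + 1))) p :=
    DifferentiableAt.comp (g := fun x => |x| ^ (-1 / ((n : ℝ) + 1))) p
      (hasDerivAt_abs_rpow hdet _).differentiableAt (differentiableAt_det hM)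
  unfold sigmaOfInverse
  rw [covVec2Mat_smul 2 Γ hf hM, pd_abs_det_rpow hM hdet,
    trace_inv_mul_covVec2Mat Γ hdet]
  module

lemma covVec2Mat_sigmaOfInverse_eq_zero_iff (Γ : Christoffel n)
    (hM : ∀ a b, DifferentiableAt ℝ (fun q => M q a b) p) (hdet : (M p).det ≠ 0) :
    covVec2Mat 2 Γ (sigmaOfInverse M) p k = 0 ↔ covVec2Mat 0 Γ M p k = 0 := by
  have hpos : 0 < |(M p).det| ^ (-1 / ((n : ℝ) + 1)) := Real.rpow_pos_of_pos (abs_pos.2 hdet) _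
  rw [covVec2Mat_sigmaOfInverse Γ hM hdet, smul_eq_zero_iff_right hpos.ne', sub_eq_zero]
  set X := covVec2Mat 0 Γ M p k
  constructor
  · intro h
    have htr : ((M p)⁻¹ * X).trace = 0 := by
      have h' := congrArg (fun Y => ((M p)⁻¹ * Y).trace) h
      simp only [Matrix.mul_smul, Matrix.nonsing_inv_mul _ hdet.isUnit, Matrix.trace_smul,
        Matrix.trace_one, Fintype.card_fin, smul_eq_mul] at h'
      field_simp at h'
      linarith
    rw [h, htr, zero_div, zero_smul]
  · intro h
    rw [h, Matrix.mul_zero, Matrix.trace_zero, zero_div, zero_smul]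

end Covariant

section LeviCivita

variable {n : ℕ} {p : Fin n → ℝ} {j k : Fin n} {g : (Fin n → ℝ) → Matrix (Fin n) (Fin n) ℝ}
  {Γ : Christoffel n}

def koszul (g : (Fin n → ℝ) → Matrix (Fin n) (Fin n) ℝ) (p : Fin n → ℝ) (j k : Fin n) :
    Fin n → ℝ :=
  fun s => pd j (fun q => g q s k) p + pd k (fun q => g q s j) p - pd s (fun q => g q j k) p

lemma leviCivita_eq_mulVec (g : (Fin n → ℝ) → Matrix (Fin n) (Fin n) ℝ) (p : Fin n → ℝ)
    (j k : Fin n) :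
    (fun i => LeviCivita g p i j k) = (g p)⁻¹ *ᵥ ((1 / 2 : ℝ) • koszul g p j k) := by
  funext i
  simp only [LeviCivita, koszul, Matrix.mulVec, dotProduct, Pi.smul_apply, smul_eq_mul,
    Finset.mul_sum]
  exact Finset.sum_congr rfl fun s _ => by ring

lemma mulVec_leviCivita (hdet : (g p).det ≠ 0) :
    g p *ᵥ (fun i => LeviCivita g p i j k) = (1 / 2 : ℝ) • koszul g p j k := by
  rw [leviCivita_eq_mulVec, Matrix.mulVec_mulVec, Matrix.mul_nonsing_inv _ hdet.isUnit,
    Matrix.one_mulVec]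

lemma covCovec2Mat_apply (Γ : Christoffel n) (hsym : ∀ a b, g p a b = g p b a) (a b : Fin n) :
    covCovec2Mat Γ g p k a b = pd k (fun q => g q a b) p
      - (g p *ᵥ fun x => Γ p x a k) b - (g p *ᵥ fun x => Γ p x b k) a := by
  simp only [covCovec2Mat, pdMat, connMat, Matrix.sub_apply, Matrix.mul_apply,
    Matrix.transpose_apply, Matrix.of_apply, Matrix.mulVec, dotProduct, hsym a]
  simp_rw [hsym b, mul_comm]

lemma covCovec2Mat_leviCivita (hsym : ∀ᶠ q in 𝓝 p, ∀ a b, g q a b = g q b a)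
    (hdet : (g p).det ≠ 0) : covCovec2Mat (LeviCivita g) g p k = 0 := by
  ext a b
  rw [covCovec2Mat_apply _ hsym.self_of_nhds, mulVec_leviCivita hdet, mulVec_leviCivita hdet]
  simp only [koszul, Pi.smul_apply, smul_eq_mul, Matrix.zero_apply]
  rw [pd_congr_nhds (hsym.mono fun q hq => hq b a)]
  ring

lemma koszul_eq_of_covCovec2Mat_eq_zero (hTF : ∀ i j k, Γ p i j k = Γ p i k j)
    (hsym : ∀ a b, g p a b = g p b a) (h : ∀ k, covCovec2Mat Γ g p k = 0) :
    (1 / 2 : ℝ) • koszul g p j k = g p *ᵥ fun x => Γ p x j k := by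
  have hpd : ∀ k a b, pd k (fun q => g q a b) p
      = (g p *ᵥ fun x => Γ p x a k) b + (g p *ᵥ fun x => Γ p x b k) a := by
    intro k a b
    have hab := congrFun (congrFun (h k) a) b
    rw [covCovec2Mat_apply Γ hsym] at hab
    simp only [Matrix.zero_apply] at hab
    linarith
  have hswap : ∀ j k, (fun x => Γ p x j k) = fun x => Γ p x k j :=
    fun j k => funext fun x => hTF x j k
  funext s
  simp only [koszul, Pi.smul_apply, smul_eq_mul, hpd]
  rw [hswap s j, hswap k j, hswap s k]
  ring

lemma leviCivita_eq_of_covCovec2Mat_eq_zero (hTF : ∀ i j k, Γ p i j k = Γ p i k j)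
    (hsym : ∀ a b, g p a b = g p b a) (hdet : (g p).det ≠ 0)
    (h : ∀ k, covCovec2Mat Γ g p k = 0) (i j k : Fin n) :
    LeviCivita g p i j k = Γ p i j k := by
  have hLC := leviCivita_eq_mulVec g p j k
  rw [koszul_eq_of_covCovec2Mat_eq_zero hTF hsym h, Matrix.mulVec_mulVec,
    Matrix.nonsing_inv_mul _ hdet.isUnit, Matrix.one_mulVec] at hLC
  exact congrFun hLC i

end LeviCivita

section Projective

variable {n : ℕ} {p : Fin n → ℝ} {Γ Γ' : Christoffel n} {φ : (Fin n → ℝ) → Fin n → ℝ}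
  {σ : (Fin n → ℝ) → Fin n → Fin n → ℝ}

def projShift (Γ : Christoffel n) (φ : (Fin n → ℝ) → Fin n → ℝ) : Christoffel n :=
  fun p i j k => Γ p i j k + (if i = j then φ p k else 0) + (if i = k then φ p j else 0)

lemma mOp_congr_christoffel (h : ∀ i j k, Γ p i j k = Γ' p i j k) : mOp Γ σ p = mOp Γ' σ p := by
  funext i j k
  simp only [mOp, covVec2, h]

/-- The `φ_k σ^{ij}` terms cancel exactly at weight 2. -/
lemma covVec2_projShift (i j k : Fin n) :
    covVec2 2 (projShift Γ φ) σ p i j k = covVec2 2 Γ σ p i j k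
      + (if i = k then ∑ s, φ p s * σ p s j else 0)
      + (if j = k then ∑ s, φ p s * σ p i s else 0) := by
  have hn : (n : ℝ) + 1 ≠ 0 := by positivity
  simp only [covVec2, projShift, add_mul, ite_mul, zero_mul, Finset.sum_add_distrib,
    Finset.sum_ite_eq, Finset.sum_ite_eq', Finset.sum_ite_irrel, Finset.sum_const_zero,
    Finset.mem_univ, if_true, Finset.sum_const, Finset.card_univ, Fintype.card_fin, nsmul_eq_mul]
  field_simp
  ring

lemma mOp_projShift (hσ : ∀ a b, σ p a b = σ p b a) :
    mOp (projShift Γ φ) σ p = mOp Γ σ p := by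
  have hn : (n : ℝ) + 1 ≠ 0 := by positivity
  have hψ : ∀ x, ∑ s, φ p s * σ p s x = ∑ s, φ p s * σ p x s :=
    fun x => Finset.sum_congr rfl fun s _ => by rw [hσ]
  have htr : ∀ x, ∑ s, covVec2 2 (projShift Γ φ) σ p x s s
      = ∑ s, covVec2 2 Γ σ p x s s + ((n : ℝ) + 1) * ∑ s, φ p s * σ p x s := by
    intro x
    simp only [covVec2_projShift, Finset.sum_add_distrib, Finset.sum_ite_eq, Finset.mem_univ,
      if_true, Finset.sum_const, Finset.card_univ, Fintype.card_fin, nsmul_eq_mul, hψ]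
    ring
  funext i j k
  rw [mOp, mOp, htr i, htr j, covVec2_projShift, hψ]
  split_ifs <;> field_simp <;> ring

lemma covVec2_projShift_eq_zero (hσ : ∀ a b, σ p a b = σ p b a)
    (hφ : ∀ x, ∑ s, φ p s * σ p s x = -(1 / ((n : ℝ) + 1)) * ∑ s, covVec2 2 Γ σ p x s s)
    (hm : ∀ i j k, mOp Γ σ p i j k = 0) (i j k : Fin n) :
    covVec2 2 (projShift Γ φ) σ p i j k = 0 := by
  have hcov : covVec2 2 Γ σ p i j k = 1 / ((n : ℝ) + 1) *
      ((∑ s, covVec2 2 Γ σ p i s s) * (if j = k then 1 else 0)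
        + (∑ s, covVec2 2 Γ σ p j s s) * (if i = k then 1 else 0)) := by
    have h := hm i j k
    rw [mOp] at h
    linarith
  have hψ : ∑ s, φ p s * σ p i s = ∑ s, φ p s * σ p s i :=
    Finset.sum_congr rfl fun s _ => by rw [hσ]
  rw [covVec2_projShift, hcov, hψ, hφ i, hφ j]
  split_ifs <;> ring

lemma mOp_eq_zero_of_covVec2_eq_zero (h : ∀ i j k, covVec2 2 Γ σ p i j k = 0) (i j k : Fin n) :
    mOp Γ σ p i j k = 0 := by
  simp [mOp, h]

lemma torsionFree_projShift (hTF : TorsionFree Γ) (φ : (Fin n → ℝ) → Fin n → ℝ) :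
    TorsionFree (projShift Γ φ) := by
  intro p i j k
  simp only [projShift, hTF p i j k]
  ring

end Projective

section Metrics

variable {n : ℕ} {U : Set (Fin n → ℝ)} {p : Fin n → ℝ} {Γ : Christoffel n}
  {M g : (Fin n → ℝ) → Matrix (Fin n) (Fin n) ℝ}

lemma covVec2Mat_leviCivita_sigmaOf (hg : ∀ a b, DifferentiableAt ℝ (fun q => g q a b) p)
    (hsym : ∀ᶠ q in 𝓝 p, ∀ a b, g q a b = g q b a) (hdet : (g p).det ≠ 0) (k : Fin n) :
    covVec2Mat 2 (LeviCivita g) (sigmaOf g) p k = 0 := by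
  have hdet_inv : ((g p)⁻¹).det ≠ 0 := by simpa [Matrix.det_nonsing_inv] using hdet
  rw [sigmaOf_eq_sigmaOfInverse, covVec2Mat_sigmaOfInverse_eq_zero_iff _
    (differentiableAt_inv_apply hg hdet) hdet_inv, covVec2Mat_inv _ hg hdet,
    covCovec2Mat_leviCivita hsym hdet]
  simp

lemma leviCivita_inv_eq_of_covVec2Mat_sigmaOfInverse_eq_zero
    (hM : ∀ a b, DifferentiableAt ℝ (fun q => M q a b) p) (hdet : (M p).det ≠ 0)
    (hsym : ∀ a b, M p a b = M p b a) (hTF : ∀ i j k, Γ p i j k = Γ p i k j)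
    (h : ∀ k, covVec2Mat 2 Γ (sigmaOfInverse M) p k = 0) (i j k : Fin n) :
    LeviCivita (fun q => (M q)⁻¹) p i j k = Γ p i j k := by
  have hdet_inv : ((M p)⁻¹).det ≠ 0 := by simpa [Matrix.det_nonsing_inv] using hdet
  refine leviCivita_eq_of_covCovec2Mat_eq_zero hTF (inv_apply_comm_of_symm hsym) hdet_inv
    (fun k => ?_) i j k
  rw [covCovec2Mat_inv Γ hM hdet, (covVec2Mat_sigmaOfInverse_eq_zero_iff Γ hM hdet).1 (h k)]
  simp

lemma metricOn_inv (hM : ∀ p ∈ U, ∀ a b, ContDiffAt ℝ ∞ (fun q => M q a b) p)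
    (hsym : ∀ p ∈ U, ∀ a b, M p a b = M p b a) (hdet : ∀ p ∈ U, (M p).det ≠ 0) :
    MetricOn U fun q => (M q)⁻¹ :=
  ⟨fun i j p hp => (contDiffAt_inv_apply (hM p hp) (hdet p hp) i j).contDiffWithinAt,
    fun p hp => inv_apply_comm_of_symm (hsym p hp),
    fun p hp => by simpa [Matrix.det_nonsing_inv] using hdet p hp⟩

end Metrics

theorem mOp_sigmaOf_eq_zero {n : ℕ} {U : Set (Fin n → ℝ)} (hU : IsOpen U) {Γ : Christoffel n}
    {g : (Fin n → ℝ) → Matrix (Fin n) (Fin n) ℝ} (hg : MetricOn U g)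
    (hpc : ∃ φ : (Fin n → ℝ) → Fin n → ℝ, ProjChange Γ (LeviCivita g) φ U) :
    ∀ p ∈ U, ∀ i j k, mOp Γ (sigmaOf g) p i j k = 0 := by
  obtain ⟨hsmooth, hsym, hdet⟩ := hg
  obtain ⟨φ, hφ⟩ := hpc
  intro p hp i j k
  have hparallel := covVec2Mat_leviCivita_sigmaOf
    (fun a b => ((hsmooth a b).contDiffAt (hU.mem_nhds hp)).differentiableAt (by simp))
    (eventually_of_mem (hU.mem_nhds hp) hsym) (hdet p hp)
  have hσsym : ∀ a b, sigmaOf g p a b = sigmaOf g p b a := fun a b => by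
    rw [sigmaOf, sigmaOf, inv_apply_comm_of_symm (hsym p hp)]
  rw [← mOp_projShift (φ := φ) hσsym, ← mOp_congr_christoffel (hφ p hp)]
  exact mOp_eq_zero_of_covVec2_eq_zero (fun i j k => congrFun (congrFun (hparallel k) i) j) i j k

theorem exists_metric_of_mOp_eq_zero {n : ℕ} {U : Set (Fin n → ℝ)} (hU : IsOpen U)
    {Γ : Christoffel n} (hTF : TorsionFree Γ) {σ : (Fin n → ℝ) → Fin n → Fin n → ℝ}
    (hsmooth : ∀ i j, ContDiffOn ℝ ∞ (fun p => σ p i j) U)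
    (hsym : ∀ p ∈ U, ∀ i j, σ p i j = σ p j i)
    (hdet : ∀ p ∈ U, (Matrix.of fun i j => σ p i j).det ≠ 0)
    (hm : ∀ p ∈ U, ∀ i j k, mOp Γ σ p i j k = 0) :
    ∃ g : (Fin n → ℝ) → Matrix (Fin n) (Fin n) ℝ, MetricOn U g ∧
      (∃ φ : (Fin n → ℝ) → Fin n → ℝ, ProjChange Γ (LeviCivita g) φ U) ∧
      ∀ p ∈ U, ∀ i j, σ p i j = sigmaOf g p i j := by
  set τ : (Fin n → ℝ) → Matrix (Fin n) (Fin n) ℝ := fun q => Matrix.of fun i j => σ q i j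
  set M : (Fin n → ℝ) → Matrix (Fin n) (Fin n) ℝ := fun q => |(τ q).det| • τ q
  have hτdet : ∀ p ∈ U, (τ p).det ≠ 0 := hdet
  have hM : ∀ p ∈ U, ∀ a b, ContDiffAt ℝ ∞ (fun q => M q a b) p := fun p hp a b =>
    ((contDiffAt_abs (hτdet p hp)).comp (g := fun x : ℝ => |x|) p
      (contDiffAt_det fun a b => (hsmooth a b).contDiffAt (hU.mem_nhds hp))).mul
      ((hsmooth a b).contDiffAt (hU.mem_nhds hp))
  have hMdet : ∀ p ∈ U, (M p).det ≠ 0 := fun p hp => by simp [M, hτdet p hp]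
  have hMsym : ∀ p ∈ U, ∀ a b, M p a b = M p b a := fun p hp a b => by
    simp [M, τ, hsym p hp a b]
  have hτ_eq : ∀ p ∈ U, τ =ᶠ[𝓝 p] sigmaOfInverse M := fun p hp =>
    eventually_of_mem (hU.mem_nhds hp) fun q hq => (sigmaOfInverse_abs_det_smul (hτdet q hq)).symm
  let φ : (Fin n → ℝ) → Fin n → ℝ := fun q =>
    -(1 / ((n : ℝ) + 1)) • Matrix.vecMul (fun x => ∑ s, covVec2 2 Γ σ q x s s) (τ q)⁻¹
  refine ⟨fun q => (M q)⁻¹, metricOn_inv hM hMsym hMdet, ⟨φ, fun p hp i j k => ?_⟩,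
    fun p hp i j => ?_⟩
  · have hMdiff a b := (hM p hp a b).differentiableAt (by simp)
    refine leviCivita_inv_eq_of_covVec2Mat_sigmaOfInverse_eq_zero hMdiff (hMdet p hp) (hMsym p hp)
      (torsionFree_projShift hTF φ p) (fun k => ?_) i j k
    rw [← covVec2Mat_congr_nhds 2 _ (hτ_eq p hp)]
    ext a b
    exact covVec2_projShift_eq_zero (hsym p hp)
      (sum_smul_vecMul_inv_mul (hτdet p hp) _ _) (hm p hp) a b k
  · have h := congrFun (congrFun ((hτ_eq p hp).self_of_nhds) i) j
    rw [sigmaOf_eq_sigmaOfInverse]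
    simpa [sigmaOfInverse, Matrix.nonsing_inv_nonsing_inv _ (hMdet p hp).isUnit, τ] using h

theorem statement_7_general {n : ℕ} (U : Set (Fin n → ℝ)) (hU : IsOpen U)
    (Γ : Christoffel n) (hTF : TorsionFree Γ) :
    (∀ g : (Fin n → ℝ) → Matrix (Fin n) (Fin n) ℝ, MetricOn U g →
      (∃ φ : (Fin n → ℝ) → Fin n → ℝ, ProjChange Γ (LeviCivita g) φ U) →
      ∀ p ∈ U, ∀ i j k, mOp Γ (sigmaOf g) p i j k = 0) ∧
    (∀ σ : (Fin n → ℝ) → Fin n → Fin n → ℝ,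
      (∀ i j, ContDiffOn ℝ ∞ (fun p => σ p i j) U) →
      (∀ p ∈ U, ∀ i j, σ p i j = σ p j i) →
      (∀ p ∈ U, (Matrix.of fun i j => σ p i j).det ≠ 0) →
      (∀ p ∈ U, ∀ i j k, mOp Γ σ p i j k = 0) →
      ∃ g : (Fin n → ℝ) → Matrix (Fin n) (Fin n) ℝ, MetricOn U g ∧
        (∃ φ : (Fin n → ℝ) → Fin n → ℝ, ProjChange Γ (LeviCivita g) φ U) ∧
        ∀ p ∈ U, ∀ i j, σ p i j = sigmaOf g p i j) :=
  ⟨fun _ hg hpc => mOp_sigmaOf_eq_zero hU hg hpc,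
    fun _ hsmooth hsym hdet hm => exists_metric_of_mOp_eq_zero hU hTF hsmooth hsym hdet hm⟩

/-- **Eastwood–Matveev.** Let `[∇]` be the projective class of a torsion-free
connection `Γ` on `U ⊆ ℝⁿ` (`n ≥ 2`).  (⇒) If the Levi-Civita connection of a
pseudo-Riemannian metric `g` lies in `[∇]`, then `σ^{ij} := g^{ij} ⊗ (Vol_g)^{2/(n+1)}`
solves the metrisability equation (the trace-free part of `∇σ` vanishes).  (⇐) Conversely,
every nondegenerate solution `σ` of the metrisability equation arises in this way from a
pseudo-Riemannian metric whose Levi-Civita connection lies in `[∇]`. -/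
theorem statement_7 {n : ℕ} (hn : 2 ≤ n) (U : Set (Fin n → ℝ)) (hU : IsOpen U)
    (Γ : Christoffel n) (hTF : TorsionFree Γ) (hsm : SmoothChristoffelOn U Γ) :
    (∀ g : (Fin n → ℝ) → Matrix (Fin n) (Fin n) ℝ, MetricOn U g →
      (∃ φ : (Fin n → ℝ) → Fin n → ℝ, ProjChange Γ (LeviCivita g) φ U) →
      ∀ p ∈ U, ∀ i j k, mOp Γ (sigmaOf g) p i j k = 0) ∧
    (∀ σ : (Fin n → ℝ) → Fin n → Fin n → ℝ,
      (∀ i j, ContDiffOn ℝ ∞ (fun p => σ p i j) U) →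
      (∀ p ∈ U, ∀ i j, σ p i j = σ p j i) →
      (∀ p ∈ U, (Matrix.of fun i j => σ p i j).det ≠ 0) →
      (∀ p ∈ U, ∀ i j k, mOp Γ σ p i j k = 0) →
      ∃ g : (Fin n → ℝ) → Matrix (Fin n) (Fin n) ℝ, MetricOn U g ∧
        (∃ φ : (Fin n → ℝ) → Fin n → ℝ, ProjChange Γ (LeviCivita g) φ U) ∧
        ∀ p ∈ U, ∀ i j, σ p i j = sigmaOf g p i j) :=
  statement_7_general U hU Γ hTF

end ProjGeo
end
end
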